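/- For every r ≥ 2, the polynomial d(z) = 2z^{2r+4} - 2z^{r+4} - z³ + 2z^{r+2} - z² - z + 1 satisfies: d(z) > 0 for all z ∈ [-3/4, 0], d(1/2) > 0, d(3/4) < 0, d(0) = 1, and d'(z) < 0 on [0, 1/2]; hence its real root of smallest absolute value lies in (1/2, 3/4). -/

import Mathlib

/-!
With `w = z ^ (r + 2)` the polynomial reads `d = 2 w² + 2 w (1 - z²) + (1 - z - z² - z³)`, and
`|w| ≤ z⁴` on `[-1, 1]`; this gives the signs on `[-3/4, 0]`, at `1/2` and at `3/4` uniformly in `r`.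
On `[0, 1/2]` the factor `u = (r + 2) z ^ r` is at most `(2z) ^ r ≤ 1`, and in terms of `u`
`d'(z) = -((4 (1 - u) + 2r + 4) z ^ (r + 3) + 2 (1 - u) z + 3 z² + 1) < 0`.
So `d` has no zero on `[-3/4, 1/2]`, changes sign on `[1/2, 3/4]`, and the least zero there is the
zero of smallest absolute value.
-/

/-- d(z) = 2z^{2r+4} - 2z^{r+4} - z³ + 2z^{r+2} - z² - z + 1. -/
def dEven (r : ℕ) (z : ℝ) : ℝ :=
  2 * z ^ (2 * r + 4) - 2 * z ^ (r + 4) - z ^ 3 + 2 * z ^ (r + 2) - z ^ 2 - z + 1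

open Set

theorem exists_zero_min_abs_of_sign_change {f : ℝ → ℝ} (hf : Continuous f) {b c : ℝ}
    (hb : 0 ≤ b) (hfb : 0 < f b) (hfc : f c < 0) (hbc : b ≤ c)
    (hne : ∀ z ∈ Icc (-c) b, f z ≠ 0) :
    ∃ ρ ∈ Ioo b c, f ρ = 0 ∧ ∀ z, f z = 0 → |ρ| ≤ |z| := by
  set S := Icc b c ∩ {z | f z = 0}
  have hS : S.Nonempty := by
    obtain ⟨x, hx, hfx⟩ := intermediate_value_Icc' hbc hf.continuousOn ⟨hfc.le, hfb.le⟩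
    exact ⟨x, hx, hfx⟩
  have hSbdd : BddBelow S := ⟨b, fun x hx => hx.1.1⟩
  obtain ⟨⟨hbρ, hρc⟩, hρ⟩ : sInf S ∈ S :=
    (isClosed_Icc.inter (isClosed_eq hf continuous_const)).csInf_mem hS hSbdd
  have hρb : sInf S ≠ b := fun h => hfb.ne' (h ▸ hρ)
  have hρc' : sInf S ≠ c := fun h => hfc.ne (h ▸ hρ)
  refine ⟨sInf S, ⟨lt_of_le_of_ne hbρ hρb.symm, lt_of_le_of_ne hρc hρc'⟩, hρ, fun z hz => ?_⟩
  rw [abs_of_nonneg (hb.trans hbρ)]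
  rcases lt_or_ge z (-c) with hzc | hzc
  · rw [abs_of_neg (by linarith)]; linarith
  rcases le_or_gt z b with hzb | hzb
  · exact absurd hz (hne z ⟨hzc, hzb⟩)
  rw [abs_of_pos (by linarith)]
  rcases le_or_gt z c with hzc' | hzc'
  · exact csInf_le hSbdd ⟨⟨hzb.le, hzc'⟩, hz⟩
  · linarith

theorem add_two_le_two_pow {r : ℕ} (hr : 2 ≤ r) : r + 2 ≤ 2 ^ r := by
  induction r, hr using Nat.le_induction with
  | base => norm_num
  | succ n hn ih => rw [pow_succ]; omega

theorem add_two_mul_pow_le_one {r : ℕ} (hr : 2 ≤ r) {z : ℝ} (hz₀ : 0 ≤ z) (hz : z ≤ 1 / 2) :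
    ((r : ℝ) + 2) * z ^ r ≤ 1 :=
  calc ((r : ℝ) + 2) * z ^ r ≤ 2 ^ r * z ^ r := by
        gcongr; exact_mod_cast add_two_le_two_pow hr
    _ = (2 * z) ^ r := (mul_pow 2 z r).symm
    _ ≤ 1 := pow_le_one₀ (by positivity) (by linarith)

theorem dEven_eq (r : ℕ) (z : ℝ) :
    dEven r z = 2 * (z ^ (r + 2)) ^ 2 + 2 * z ^ (r + 2) * (1 - z ^ 2) + (1 - z - z ^ 2 - z ^ 3) := by
  unfold dEven; ring

theorem abs_pow_add_two_le {r : ℕ} (hr : 2 ≤ r) {z : ℝ} (hz : |z| ≤ 1) :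
    |z ^ (r + 2)| ≤ z ^ 4 := by
  calc |z ^ (r + 2)| = |z| ^ (r + 2) := abs_pow z _
    _ ≤ |z| ^ 4 := pow_le_pow_of_le_one (abs_nonneg z) hz (by omega)
    _ = z ^ 4 := (even_two_mul 2).pow_abs z

theorem dEven_pos_of_mem_Icc_neg {r : ℕ} (hr : 2 ≤ r) {z : ℝ} (hz : z ∈ Icc (-3 / 4 : ℝ) 0) :
    0 < dEven r z := by
  obtain ⟨hz₁, hz₂⟩ := hz
  have hw := abs_le.mp (abs_pow_add_two_le hr (abs_le.mpr ⟨by linarith, by linarith⟩))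
  have h1z : 0 ≤ 1 - z ^ 2 ∧ 1 - z ^ 2 ≤ 1 := ⟨by nlinarith, by nlinarith⟩
  have hmix : -(2 * z ^ 4) ≤ 2 * z ^ (r + 2) * (1 - z ^ 2) := by nlinarith [pow_nonneg (sq_nonneg z) 2]
  rw [dEven_eq]
  nlinarith [sq_nonneg (z ^ (r + 2)), mul_nonneg (neg_nonneg.mpr hz₂) (by linarith : (0 : ℝ) ≤ z + 3 / 4),
    sq_nonneg (z ^ 2 - 1 / 4), sq_nonneg (z + 1 / 2)]

theorem dEven_half_pos (r : ℕ) : 0 < dEven r (1 / 2) := by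
  rw [dEven_eq]; norm_num; positivity

theorem dEven_three_quarters_neg {r : ℕ} (hr : 2 ≤ r) : dEven r (3 / 4) < 0 := by
  have hw : (3 / 4 : ℝ) ^ (r + 2) ≤ (3 / 4) ^ 4 :=
    pow_le_pow_of_le_one (by norm_num) (by norm_num) (by omega)
  have hw₀ : (0 : ℝ) ≤ (3 / 4) ^ (r + 2) := by positivity
  rw [dEven_eq]; nlinarith

theorem dEven_zero (r : ℕ) : dEven r 0 = 1 := by
  simp [dEven]

theorem continuous_dEven (r : ℕ) : Continuous (dEven r) := by
  unfold dEven; fun_prop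

theorem hasDerivAt_dEven (r : ℕ) (z : ℝ) :
    HasDerivAt (dEven r)
      ((4 * r + 8) * z ^ (2 * r + 3) - (2 * r + 8) * z ^ (r + 3) - 3 * z ^ 2
        + (2 * r + 4) * z ^ (r + 1) - 2 * z - 1) z := by
  have h := ((((((hasDerivAt_pow (2 * r + 4) z).const_mul (2 : ℝ)).sub
      ((hasDerivAt_pow (r + 4) z).const_mul (2 : ℝ))).sub (hasDerivAt_pow 3 z)).add
      ((hasDerivAt_pow (r + 2) z).const_mul (2 : ℝ))).sub (hasDerivAt_pow 2 z)).sub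
      (hasDerivAt_id z) |>.add_const 1
  refine h.congr_deriv ?_
  rw [show 2 * r + 4 - 1 = 2 * r + 3 by omega,
    show r + 4 - 1 = r + 3 by omega, show r + 2 - 1 = r + 1 by omega]
  push_cast
  ring

theorem deriv_dEven_neg {r : ℕ} (hr : 2 ≤ r) {z : ℝ} (hz : z ∈ Icc (0 : ℝ) (1 / 2)) :
    deriv (dEven r) z < 0 := by
  obtain ⟨hz₀, hz₁⟩ := hz
  set u := ((r : ℝ) + 2) * z ^ r
  have hu : 0 ≤ 1 - u := sub_nonneg.mpr (add_two_mul_pow_le_one hr hz₀ hz₁)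
  rw [(hasDerivAt_dEven r z).deriv]
  calc _ = -((4 * (1 - u) + 2 * r + 4) * z ^ (r + 3) + 2 * (1 - u) * z + 3 * z ^ 2 + 1) := by
        simp only [u]; ring
    _ < 0 := by
        have : 0 ≤ (4 * (1 - u) + 2 * r + 4) * z ^ (r + 3) + 2 * (1 - u) * z := by positivity
        nlinarith [sq_nonneg z]

theorem dEven_pos_of_mem_Icc_nonneg {r : ℕ} (hr : 2 ≤ r) {z : ℝ} (hz : z ∈ Icc (0 : ℝ) (1 / 2)) :
    0 < dEven r z := by
  have hanti : StrictAntiOn (dEven r) (Icc 0 (1 / 2)) :=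
    strictAntiOn_of_deriv_neg (convex_Icc _ _) (continuous_dEven r).continuousOn fun z hz =>
      deriv_dEven_neg hr (interior_subset hz)
  exact (dEven_half_pos r).trans_le (hanti.antitoneOn hz (right_mem_Icc.mpr (by norm_num)) hz.2)

theorem dEven_smallest_root (r : ℕ) (hr : 2 ≤ r) :
    (∀ z ∈ Set.Icc (-3 / 4 : ℝ) 0, 0 < dEven r z) ∧
    0 < dEven r (1 / 2) ∧
    dEven r (3 / 4) < 0 ∧
    dEven r 0 = 1 ∧
    (∀ z ∈ Set.Icc (0 : ℝ) (1 / 2), deriv (dEven r) z < 0) ∧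
    (∃ ρ ∈ Set.Ioo (1 / 2 : ℝ) (3 / 4), dEven r ρ = 0 ∧
      ∀ z : ℝ, dEven r z = 0 → |ρ| ≤ |z|) := by
  refine ⟨fun z => dEven_pos_of_mem_Icc_neg hr, dEven_half_pos r, dEven_three_quarters_neg hr,
    dEven_zero r, fun z => deriv_dEven_neg hr, ?_⟩
  refine exists_zero_min_abs_of_sign_change (continuous_dEven r) (by norm_num) (dEven_half_pos r)
    (dEven_three_quarters_neg hr) (by norm_num) fun z hz => ?_
  rcases le_total z 0 with hz₀ | hz₀
  · exact (dEven_pos_of_mem_Icc_neg hr ⟨by linarith [hz.1], hz₀⟩).ne'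
  · exact (dEven_pos_of_mem_Icc_nonneg hr ⟨hz₀, hz.2⟩).ne'
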